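/- For a > 0 and Re(s) > 0, ∫_C e^{−2πi a |z|²} |z|_C^{s} d^×z = a^{−s} e^{−sπi/2} Γ(s) / (2π)^{s−1}, where |z|_C = |z|², d^×z = dz/|z|_C, and the integral is understood as the limit of the absolutely convergent integrals with a replaced by a − iε, ε → 0⁺. -/

import Mathlib

/-!
Put `b = 2π(ε + ia)`, so that the integrand is `e^{-b|z|²} (|z|²)^{s-1}`. Integrating in
polar coordinates and substituting `t = |z|²` turns the integral over `ℂ` (Lebesgue measure)
into `π ∫₀^∞ t^{s-1} e^{-bt} dt = π b^{-s} Γ(s)`. The Gamma integral is classical for real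
`b > 0`; both sides are holomorphic in `b` on `Re b > 0`, so it holds there by the identity
theorem. As `ε → 0⁺`, `b` tends to `2πia`, which lies off the branch cut of the principal power, so
`b^{-s} → (2πa)^{-s} e^{-πis/2}`; the factor `2` of the self-dual measure then produces
`(2π)^{1-s}`.
-/

open MeasureTheory Real Filter Set
open scoped Topology

lemma norm_cpow_mul_cexp_neg_mul {w b : ℂ} {t : ℝ} (ht : 0 < t) :
    ‖(t : ℂ) ^ w * Complex.exp (-(b * t))‖ = t ^ w.re * Real.exp (-b.re * t) := by
  rw [norm_mul, Complex.norm_cpow_eq_rpow_re_of_pos ht, Complex.norm_exp]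
  simp

lemma integrableOn_rpow_mul_exp_neg_mul {r c : ℝ} (hr : -1 < r) (hc : 0 < c) :
    IntegrableOn (fun t : ℝ => t ^ r * Real.exp (-c * t)) (Ioi 0) := by
  simpa using integrableOn_rpow_mul_exp_neg_mul_rpow hr one_pos hc

lemma integrableOn_cpow_mul_cexp_neg_mul {w b : ℂ} (hw : -1 < w.re) (hb : 0 < b.re) :
    IntegrableOn (fun t : ℝ => (t : ℂ) ^ w * Complex.exp (-(b * t))) (Ioi 0) := by
  refine (integrableOn_rpow_mul_exp_neg_mul hw hb).mono' (by fun_prop) ?_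
  filter_upwards [ae_restrict_mem measurableSet_Ioi] with t ht
  rw [norm_cpow_mul_cexp_neg_mul ht]

lemma hasDerivAt_cpow_mul_cexp_neg_mul {s : ℂ} {t : ℝ} (ht : 0 < t) (b : ℂ) :
    HasDerivAt (fun c : ℂ => (t : ℂ) ^ (s - 1) * Complex.exp (-(c * t)))
      (-((t : ℂ) ^ s * Complex.exp (-(b * t)))) b := by
  have hexp : HasDerivAt (fun c : ℂ => Complex.exp (-(c * t)))
      (Complex.exp (-(b * t)) * -t) b := by
    simpa using ((hasDerivAt_id b).mul_const (t : ℂ)).neg.cexp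
  have hpow : (t : ℂ) ^ s = (t : ℂ) ^ (s - 1) * t := by
    conv_lhs => rw [← sub_add_cancel s 1, Complex.cpow_add _ _ (by exact_mod_cast ht.ne'),
      Complex.cpow_one]
  refine (hexp.const_mul _).congr_deriv ?_
  rw [hpow]
  ring

lemma differentiableOn_integral_cpow_mul_cexp_neg_mul {s : ℂ} (hs : 0 < s.re) :
    DifferentiableOn ℂ
      (fun b : ℂ => ∫ t in Ioi (0 : ℝ), (t : ℂ) ^ (s - 1) * Complex.exp (-(b * t)))
      {b | 0 < b.re} := by
  intro b₀ hb₀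
  have hε : 0 < b₀.re / 2 := half_pos hb₀
  have hball : ∀ b ∈ Metric.ball b₀ (b₀.re / 2), b₀.re / 2 ≤ b.re := by
    intro b hb
    have := (Complex.abs_re_le_norm (b - b₀)).trans_lt (mem_ball_iff_norm.mp hb)
    rw [Complex.sub_re, abs_lt] at this
    linarith
  refine (hasDerivAt_integral_of_dominated_loc_of_deriv_le (μ := volume.restrict (Ioi (0 : ℝ)))
    (F := fun b (t : ℝ) => (t : ℂ) ^ (s - 1) * Complex.exp (-(b * t)))
    (Metric.ball_mem_nhds b₀ hε)
    (.of_forall fun _ => by fun_prop)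
    (integrableOn_cpow_mul_cexp_neg_mul (w := s - 1) (by simpa using hs) hb₀)
    (F' := fun b t => -((t : ℂ) ^ s * Complex.exp (-(b * t)))) (by fun_prop) ?_
    (integrableOn_rpow_mul_exp_neg_mul (r := s.re) (by linarith) hε) ?_).2
    |>.differentiableAt.differentiableWithinAt
  · filter_upwards [ae_restrict_mem measurableSet_Ioi] with t (ht : 0 < t) b hb
    rw [norm_neg, norm_cpow_mul_cexp_neg_mul ht]
    gcongr
    exact hball b hb
  · filter_upwards [ae_restrict_mem measurableSet_Ioi] with t ht b _
    exact hasDerivAt_cpow_mul_cexp_neg_mul ht b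

lemma eqOn_re_pos_of_forall_ofReal_eq {E : Type*} [NormedAddCommGroup E] [NormedSpace ℂ E]
    [CompleteSpace E] {f g : ℂ → E} (hf : DifferentiableOn ℂ f {z | 0 < z.re})
    (hg : DifferentiableOn ℂ g {z | 0 < z.re}) (hfg : ∀ x : ℝ, 0 < x → f x = g x) :
    EqOn f g {z | 0 < z.re} := by
  have hU : IsOpen {z : ℂ | 0 < z.re} := isOpen_lt continuous_const Complex.continuous_re
  refine (hf.analyticOnNhd hU).eqOn_of_preconnected_of_frequently_eq (hg.analyticOnNhd hU)
    (convex_halfSpace_re_gt 0).isPreconnected (z₀ := 1) (by simp) ?_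
  have hofReal : Tendsto ((↑) : ℝ → ℂ) (𝓝[>] 1) (𝓝[≠] 1) :=
    tendsto_nhdsWithin_of_tendsto_nhds_of_eventually_within _
      ((Complex.continuous_ofReal.tendsto 1).mono_left nhdsWithin_le_nhds)
      (eventually_nhdsWithin_of_forall fun x (hx : 1 < x) => by simpa using hx.ne')
  refine hofReal.frequently (Eventually.frequently ?_)
  filter_upwards [self_mem_nhdsWithin] with x (hx : 1 < x)
  exact hfg x (one_pos.trans hx)

lemma integral_cpow_mul_cexp_neg_mul_Ioi {s b : ℂ} (hs : 0 < s.re) (hb : 0 < b.re) :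
    ∫ t in Ioi (0 : ℝ), (t : ℂ) ^ (s - 1) * Complex.exp (-(b * t))
      = b ^ (-s) * Complex.Gamma s := by
  refine eqOn_re_pos_of_forall_ofReal_eq (differentiableOn_integral_cpow_mul_cexp_neg_mul hs)
    (g := fun b => b ^ (-s) * Complex.Gamma s) (fun c hc => ?_) (fun r hr => ?_) hb
  · exact ((differentiableAt_id.cpow_const (Or.inl hc)).mul_const _).differentiableWithinAt
  · rw [Complex.integral_cpow_mul_exp_neg_mul_Ioi hs hr, one_div,
      Complex.inv_cpow _ _ (by rw [Complex.arg_ofReal_of_nonneg hr.le]; exact pi_ne_zero.symm),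
      Complex.cpow_neg]

lemma integral_comp_norm_sq_complex {E : Type*} [NormedAddCommGroup E] [NormedSpace ℝ E]
    (g : ℝ → E) : ∫ z : ℂ, g (‖z‖ ^ 2) = π • ∫ t in Ioi (0 : ℝ), g t := by
  have hball : (volume : Measure ℂ).real (Metric.ball 0 1) = π := by
    simp [measureReal_def, Complex.volume_ball]
  rw [integral_fun_norm_addHaar volume (fun r => g (r ^ 2)), Complex.finrank_real_complex, hball,
    ← Nat.cast_smul_eq_nsmul ℝ, ← integral_smul, ← integral_smul]
  conv_rhs => rw [← integral_comp_rpow_Ioi_of_pos two_pos, ← integral_smul]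
  refine setIntegral_congr_fun measurableSet_Ioi fun r _ => ?_
  simp only [smul_smul, Real.rpow_two]
  congr 1
  norm_num
  ring

lemma integral_cexp_neg_mul_norm_sq_mul_cpow {s b : ℂ} (hs : 0 < s.re) (hb : 0 < b.re) :
    ∫ z : ℂ, Complex.exp (-b * (‖z‖ : ℂ) ^ 2) * ((‖z‖ : ℂ) ^ 2) ^ (s - 1)
      = π * (b ^ (-s) * Complex.Gamma s) := by
  have hradial := integral_comp_norm_sq_complex
    (fun t : ℝ => (t : ℂ) ^ (s - 1) * Complex.exp (-(b * t)))
  push_cast at hradial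
  simp_rw [mul_comm (Complex.exp _), neg_mul]
  rw [hradial, integral_cpow_mul_cexp_neg_mul_Ioi hs hb, Complex.real_smul]

lemma ofReal_mul_I_cpow {x : ℝ} (hx : 0 < x) (w : ℂ) :
    ((x : ℂ) * Complex.I) ^ w = (x : ℂ) ^ w * Complex.exp (w * π * Complex.I / 2) := by
  have hx' : (x : ℂ) ≠ 0 := Complex.ofReal_ne_zero.mpr hx.ne'
  rw [Complex.cpow_def_of_ne_zero (mul_ne_zero hx' Complex.I_ne_zero),
    Complex.cpow_def_of_ne_zero hx', Complex.log_ofReal_mul hx Complex.I_ne_zero, Complex.log_I,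
    Complex.ofReal_log hx.le, ← Complex.exp_add]
  ring_nf

lemma two_pi_mul_cpow_neg_two_pi_mul_ofReal_mul_I {a : ℝ} (ha : 0 < a) (s : ℂ) :
    2 * π * (2 * π * (a * Complex.I)) ^ (-s)
      = (a : ℂ) ^ (-s) * Complex.exp (-s * π * Complex.I / 2) / (2 * π) ^ (s - 1) := by
  have h2π : (0 : ℝ) < 2 * π := by positivity
  have h2π' : (2 * π : ℂ) ≠ 0 := by exact_mod_cast h2π.ne'
  rw [← mul_assoc, show (2 * π * a : ℂ) = ((2 * π : ℝ) * a : ℝ) by push_cast; ring,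
    ofReal_mul_I_cpow (by positivity), Complex.ofReal_mul,
    Complex.mul_cpow_ofReal_nonneg h2π.le ha.le, Complex.cpow_neg, Complex.cpow_neg,
    Complex.cpow_sub _ _ h2π', Complex.cpow_one]
  push_cast
  field_simp

/-- For `a > 0` and `Re s > 0`,
`∫_ℂ e^{−2πi a |z|²} |z|_ℂ^s d^×z = a^{−s} e^{−sπi/2} Γ(s)/(2π)^{s−1}`,
where `|z|_ℂ = |z|²`, `d^×z = dz/|z|_ℂ` and `dz` is the self-dual additive Haar
measure of `ℂ` (twice the Lebesgue measure); the integral is understood as the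
limit, as `ε → 0⁺`, of the absolutely convergent integrals with `a` replaced by
`a − iε`. -/
theorem mellin_complex_second_degree_character (a : ℝ) (ha : 0 < a)
    (s : ℂ) (hs : 0 < s.re) :
    Tendsto
      (fun ε : ℝ =>
        ∫ z : ℂ,
          Complex.exp (-2 * (π : ℂ) * Complex.I * ((a : ℂ) - (ε : ℂ) * Complex.I)
              * ((‖z‖ : ℝ) : ℂ) ^ 2)
            * (((‖z‖ : ℝ) : ℂ) ^ 2) ^ (s - 1)
          ∂((2 : ENNReal) • (volume : Measure ℂ)))
      (nhdsWithin 0 (Set.Ioi 0))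
      (nhds ((a : ℂ) ^ (-s) * Complex.exp (-s * (π : ℂ) * Complex.I / 2)
        * Complex.Gamma s / (2 * (π : ℂ)) ^ (s - 1))) := by
  set b : ℝ → ℂ := fun ε => 2 * π * (ε + a * Complex.I)
  have hb : ∀ ε : ℝ, 0 < ε → 0 < (b ε).re := fun ε hε => by simp [b]; positivity
  have hcoef : ∀ ε : ℝ, -2 * π * Complex.I * (a - ε * Complex.I) = -b ε := fun ε => by
    linear_combination (2 * π * ε : ℂ) * Complex.I_sq
  have hcont : ContinuousAt (fun ε => 2 * π * (b ε ^ (-s) * Complex.Gamma s)) 0 := by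
    have hb₀ : b 0 ∈ Complex.slitPlane := Or.inr (by simp [b]; positivity)
    fun_prop (disch := exact hb₀)
  have hval : 2 * π * (b 0 ^ (-s) * Complex.Gamma s)
      = (a : ℂ) ^ (-s) * Complex.exp (-s * π * Complex.I / 2) * Complex.Gamma s
        / (2 * π) ^ (s - 1) := by
    rw [← mul_assoc, show b 0 = 2 * π * (a * Complex.I) by simp [b],
      two_pi_mul_cpow_neg_two_pi_mul_ofReal_mul_I ha]
    ring
  rw [← hval]
  refine (hcont.tendsto.mono_left nhdsWithin_le_nhds).congr' ?_
  filter_upwards [self_mem_nhdsWithin] with ε hε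
  rw [integral_smul_measure, hcoef, integral_cexp_neg_mul_norm_sq_mul_cpow hs (hb ε hε),
    ENNReal.toReal_ofNat, Complex.real_smul]
  push_cast
  ring
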